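/- Fix an integer ℓ ≥ 1, real weights γ_k ≥ 0 for k ∈ {−ℓ,…,ℓ−1}, and λ > 0. Let (ρ_j^0)_{j∈ℤ} satisfy ρ_j^0 ≥ 0 for every j, ρ_j^0 = 0 for every j ≥ 0, and ρ_{−1}^0 > 0. Define c_j^0 = Σ_{k=−ℓ}^{ℓ−1} γ_k ρ_{j−k}^0 and compute one step of the nonlocal Lax–Friedrichs scheme: ρ_j^1 = (1/2)(ρ_{j+1}^0 + ρ_{j−1}^0) − (λ/2)(ρ_{j+1}^0 c_{j+1}^0 − ρ_{j−1}^0 c_{j−1}^0). Then ρ_0^1 ≥ (1/2) ρ_{−1}^0 > 0. That is, the Lax–Friedrichs type scheme immediately spreads the support of a nonnegative discrete solution to the right, regardless of the quadrature weights. -/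

import Mathlib

/-- The discrete convolution `c_j = Σ_{k=−ℓ}^{ℓ−1} γ_k ρ_{j−k}`. -/
noncomputable def discConv (ℓ : ℕ) (γ : ℤ → ℝ) (ρ : ℤ → ℝ) (j : ℤ) : ℝ :=
  ∑ k ∈ Finset.Icc (-(ℓ:ℤ)) ((ℓ:ℤ) - 1), γ k * ρ (j - k)

/-- One step of the nonlocal Lax–Friedrichs scheme:
`ρ_j ↦ (1/2)(ρ_{j+1} + ρ_{j−1}) − (λ/2)(ρ_{j+1} c_{j+1} − ρ_{j−1} c_{j−1})`. -/
noncomputable def lfStep (ℓ : ℕ) (γ : ℤ → ℝ) (lam : ℝ) (ρ : ℤ → ℝ) (j : ℤ) : ℝ :=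
  (1/2) * (ρ (j + 1) + ρ (j - 1))
    - (lam/2) * (ρ (j + 1) * discConv ℓ γ ρ (j + 1) - ρ (j - 1) * discConv ℓ γ ρ (j - 1))

/-!
With `ρ_1 = 0` the right flux term vanishes, so `ρ¹_0 = (1/2)ρ_{-1} + (λ/2)ρ_{-1}c_{-1}`.
Since the weights and the density are nonnegative, so is `c_{-1}`, and the flux term coming
from the left can only add mass: the numerical viscosity `(1/2)ρ_{-1}` alone already puts
mass at index `0`.
-/

theorem discConv_nonneg {ℓ : ℕ} {γ ρ : ℤ → ℝ}
    (hγ : ∀ k ∈ Finset.Icc (-(ℓ:ℤ)) ((ℓ:ℤ) - 1), 0 ≤ γ k) (hρ : ∀ j, 0 ≤ ρ j) (j : ℤ) :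
    0 ≤ discConv ℓ γ ρ j :=
  Finset.sum_nonneg fun k hk => mul_nonneg (hγ k hk) (hρ _)

theorem lfStep_eq_of_succ_eq_zero {ℓ : ℕ} {γ ρ : ℤ → ℝ} {lam : ℝ} {j : ℤ}
    (h : ρ (j + 1) = 0) :
    lfStep ℓ γ lam ρ j = (1/2) * ρ (j - 1) + (lam/2) * (ρ (j - 1) * discConv ℓ γ ρ (j - 1)) := by
  rw [lfStep, h]
  ring

theorem half_le_lfStep_of_succ_eq_zero {ℓ : ℕ} {γ ρ : ℤ → ℝ} {lam : ℝ} {j : ℤ}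
    (hlam : 0 ≤ lam) (hρ : 0 ≤ ρ (j - 1)) (hc : 0 ≤ discConv ℓ γ ρ (j - 1))
    (h : ρ (j + 1) = 0) :
    (1/2) * ρ (j - 1) ≤ lfStep ℓ γ lam ρ j := by
  rw [lfStep_eq_of_succ_eq_zero h]
  have : 0 ≤ (lam/2) * (ρ (j - 1) * discConv ℓ γ ρ (j - 1)) := by positivity
  linarith

theorem laxFriedrichs_spreads_support_general (ℓ : ℕ)
    (γ : ℤ → ℝ) (hγ_nonneg : ∀ k ∈ Finset.Icc (-(ℓ:ℤ)) ((ℓ:ℤ) - 1), 0 ≤ γ k)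
    (lam : ℝ) (hlam : 0 < lam) (ρ : ℤ → ℝ) (hρ_nonneg : ∀ j, 0 ≤ ρ j)
    (hρ_zero : ∀ j : ℤ, 0 ≤ j → ρ j = 0) (hρ_neg : 0 < ρ (-1)) :
    (1/2) * ρ (-1) ≤ lfStep ℓ γ lam ρ 0 ∧ 0 < (1/2) * ρ (-1) :=
  ⟨half_le_lfStep_of_succ_eq_zero (j := 0) hlam.le (hρ_nonneg _)
      (discConv_nonneg hγ_nonneg hρ_nonneg _) (hρ_zero 1 zero_le_one),
    by positivity⟩

/-- The nonlocal Lax–Friedrichs scheme immediately spreads the support of a nonnegative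
discrete solution to the right: if `ρ⁰ ≥ 0` vanishes on the nonnegative indices and
`ρ⁰_{−1} > 0`, then after one step `ρ¹_0 ≥ (1/2)ρ⁰_{−1} > 0`. -/
theorem laxFriedrichs_spreads_support (ℓ : ℕ) (hℓ : 1 ≤ ℓ)
    (γ : ℤ → ℝ) (hγ_nonneg : ∀ k ∈ Finset.Icc (-(ℓ:ℤ)) ((ℓ:ℤ) - 1), 0 ≤ γ k)
    (lam : ℝ) (hlam : 0 < lam) (ρ : ℤ → ℝ) (hρ_nonneg : ∀ j, 0 ≤ ρ j)
    (hρ_zero : ∀ j : ℤ, 0 ≤ j → ρ j = 0) (hρ_neg : 0 < ρ (-1)) :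
    (1/2) * ρ (-1) ≤ lfStep ℓ γ lam ρ 0 ∧ 0 < (1/2) * ρ (-1) :=
  laxFriedrichs_spreads_support_general ℓ γ hγ_nonneg lam hlam ρ hρ_nonneg hρ_zero hρ_neg
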